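/- arXiv:2205.13283 — 3 statements merged into one kernel-verified Lean document; each statement's English description precedes it below -/
import Mathlib

section
/- Explicit construction of a lifted parameter (narrow input case): Let NN have widths {m_l}_{l=0}^L, let q ∈ [L−1], and suppose m_q ≤ m_{q+1}. Let NN′ be one-layer deeper than NN at position q with inserted width m′_{q̂} = m_q. Let (a,b) be an affine subdomain of σ with constants λ ≠ 0, μ, and fix x_low < x_up with [x_low, x_up] ⊂ (a,b). Given a parameter θ of NN, set x_min = min_{i∈[n], j∈[m_q]} (f^[q]_θ(x_i))_j and x_max the corresponding maximum, and assume x_min ≠ x_max. Define ξ = (x_up − x_low)/(x_max − x_min), W′^[q̂] = ξ I, b′^[q̂] = (x_low − ξ x_min)1, W′^[q+1] = (1/(λξ)) W^[q+1], and b′^[q+1] = b^[q+1] − W′^[q+1](λ b′^[q̂] + μ 1), and let θ′ be the parameter of NN′ obtained from θ by inserting (W′^[q̂], b′^[q̂]) at layer q̂ and replacing layer q+1 by (W′^[q+1], b′^[q+1]). Then θ′ ∈ T_S(θ), i.e., θ′ satisfies the local-in-layer, layer linearization, and output preserving conditions. -/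
/-!
Common formalization of fully-connected neural networks, one-layer deeper
networks, and the critical lifting operator from
"Embedding Principle in Depth for the Loss Landscape Analysis of Deep Neural Networks".

Vectors are modelled as functions `ℕ → ℝ` (coordinates beyond the layer width
are irrelevant and feature vectors are zero-padded there); parameters assign to
each layer index `l ≥ 1` a weight "matrix" `ℕ → ℕ → ℝ` and a bias `ℕ → ℝ`.
-/

/-- Parameters of a network: for each layer `l ≥ 1` a weight matrix and a bias. -/
abbrev NNParams : Type := ℕ → (ℕ → ℕ → ℝ) × (ℕ → ℝ)

/-- Feature vectors `f^[l]_θ(x)`: `f^[0]_θ(x) = x` (truncated to the input width),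
`f^[l]_θ(x) = σ(W^[l] f^[l-1]_θ(x) + b^[l])` for `1 ≤ l ≤ L-1`, and no activation
at the output layer `L`.  Coordinates outside the layer width are `0`. -/
noncomputable def feat (σ : ℝ → ℝ) (m : ℕ → ℕ) (L : ℕ) (θ : NNParams) (x : ℕ → ℝ) :
    ℕ → ℕ → ℝ
  | 0 => fun i => if i < m 0 then x i else 0
  | l + 1 => fun i =>
      if i < m (l + 1) then
        (if l + 1 = L then id else σ)
          ((∑ j ∈ Finset.range (m l), (θ (l + 1)).1 i j * feat σ m L θ x l j)
            + (θ (l + 1)).2 i)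
      else 0

/-- Output `f_θ(x) = W^[L] f^[L-1]_θ(x) + b^[L]` of the network. -/
noncomputable def nnOut (σ : ℝ → ℝ) (m : ℕ → ℕ) (L : ℕ) (θ : NNParams) (x : ℕ → ℝ) :
    ℕ → ℝ :=
  feat σ m L θ x L

/-- Pre-activation of layer `l ≥ 1`: `W^[l] f^[l-1]_θ(x) + b^[l]`. -/
noncomputable def preAct (σ : ℝ → ℝ) (m : ℕ → ℕ) (L : ℕ) (θ : NNParams) (x : ℕ → ℝ)
    (l i : ℕ) : ℝ :=
  (∑ j ∈ Finset.range (m (l - 1)), (θ l).1 i j * feat σ m L θ x (l - 1) j) + (θ l).2 i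

/-- `(a,b)` is an affine subdomain of `σ` with slope `lam ≠ 0` and intercept `mu`. -/
def AffineSubdomain (σ : ℝ → ℝ) (a b lam mu : ℝ) : Prop :=
  a < b ∧ lam ≠ 0 ∧ ∀ t ∈ Set.Ioo a b, σ t = lam * t + mu

/-- Widths of the one-layer deeper network obtained by inserting a hidden layer of
width `mh` between layers `q` and `q+1` (the inserted layer gets index `q+1` and
all later layers are shifted up by one). -/
def insertWidth (m : ℕ → ℕ) (q mh : ℕ) : ℕ → ℕ :=
  fun l => if l ≤ q then m l else if l = q + 1 then mh else m (l - 1)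

/-- Local-in-layer condition: all layers of the deeper network other than the inserted
layer (deep index `q+1`) and the following layer (deep index `q+2`) are inherited
from the shallow network. -/
def LocalInLayer (m : ℕ → ℕ) (L q : ℕ) (θ θ' : NNParams) : Prop :=
  (∀ l, 1 ≤ l → l ≤ q →
    (∀ i < m l, ∀ j < m (l - 1), (θ' l).1 i j = (θ l).1 i j) ∧
    (∀ i < m l, (θ' l).2 i = (θ l).2 i)) ∧
  (∀ l, q + 3 ≤ l → l ≤ L + 1 →
    (∀ i < m (l - 1), ∀ j < m (l - 2), (θ' l).1 i j = (θ (l - 1)).1 i j) ∧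
    (∀ i < m (l - 1), (θ' l).2 i = (θ (l - 1)).2 i))

/-- Output preserving condition:
`W'^[q+1] diag(λ) W'^[q̂] = W^[q+1]` and
`W'^[q+1] diag(λ) b'^[q̂] + W'^[q+1] μ + b'^[q+1] = b^[q+1]`
(in deep indexing, `W'^[q̂] = (θ' (q+1)).1` and `W'^[q+1] = (θ' (q+2)).1`). -/
def OutputPres (m : ℕ → ℕ) (q mh : ℕ) (θ θ' : NNParams) (lam mu : ℕ → ℝ) : Prop :=
  (∀ i < m (q + 1), ∀ k < m q,
    (∑ j ∈ Finset.range mh, (θ' (q + 2)).1 i j * (lam j * (θ' (q + 1)).1 j k))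
      = (θ (q + 1)).1 i k) ∧
  (∀ i < m (q + 1),
    (∑ j ∈ Finset.range mh, (θ' (q + 2)).1 i j * (lam j * (θ' (q + 1)).2 j + mu j))
      + (θ' (q + 2)).2 i = (θ (q + 1)).2 i)

/-- `θ'` is a one-layer lifting of `θ` with explicit slope/intercept vectors
`lam, mu` and affine subdomains `(aa j, bb j)`: the local-in-layer, layer
linearization and output preserving conditions. -/
def LiftWitness (σ : ℝ → ℝ) (m : ℕ → ℕ) (L q mh : ℕ) {n : ℕ}
    (S : Fin n → (ℕ → ℝ) × (ℕ → ℝ)) (θ θ' : NNParams) (lam mu aa bb : ℕ → ℝ) : Prop :=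
  LocalInLayer m L q θ θ' ∧
  (∀ j < mh, AffineSubdomain σ (aa j) (bb j) (lam j) (mu j) ∧
    ∀ i : Fin n,
      preAct σ (insertWidth m q mh) (L + 1) θ' (S i).1 (q + 1) j ∈ Set.Ioo (aa j) (bb j)) ∧
  OutputPres m q mh θ θ' lam mu

/-- The one-layer lifting operator `T_S(θ)`: the set of all parameters of the
one-layer deeper network satisfying the local-in-layer, layer linearization and
output preserving conditions. -/
def liftSet (σ : ℝ → ℝ) (m : ℕ → ℕ) (L q mh : ℕ) {n : ℕ}
    (S : Fin n → (ℕ → ℝ) × (ℕ → ℝ)) (θ : NNParams) : Set NNParams :=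
  { θ' | ∃ lam mu aa bb : ℕ → ℝ, LiftWitness σ m L q mh S θ θ' lam mu aa bb }

/-- Empirical risk `R_S(θ) = (1/n) ∑ᵢ ℓ(f_θ(xᵢ), yᵢ)`. -/
noncomputable def empRisk (σ : ℝ → ℝ) (ℓ : (ℕ → ℝ) → (ℕ → ℝ) → ℝ) (m : ℕ → ℕ) (L : ℕ)
    {n : ℕ} (S : Fin n → (ℕ → ℝ) × (ℕ → ℝ)) (θ : NNParams) : ℝ :=
  (1 / (n : ℝ)) * ∑ i : Fin n, ℓ (nnOut σ m L θ (S i).1) (S i).2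

/-- Update a single weight entry `W^[l]_{ij}` of the parameters. -/
def updW (θ : NNParams) (l i j : ℕ) (t : ℝ) : NNParams :=
  fun l' => if l' = l then
    ((fun i' j' => if i' = i ∧ j' = j then t else (θ l).1 i' j'), (θ l).2)
  else θ l'

/-- Update a single bias entry `b^[l]_i` of the parameters. -/
def updB (θ : NNParams) (l i : ℕ) (t : ℝ) : NNParams :=
  fun l' => if l' = l then
    ((θ l).1, fun i' => if i' = i then t else (θ l).2 i')
  else θ l'

/-- `θ` is a critical point of the empirical risk: all partial derivatives with
respect to the weight and bias entries of all layers vanish. -/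
def IsCriticalPt (σ : ℝ → ℝ) (ℓ : (ℕ → ℝ) → (ℕ → ℝ) → ℝ) (m : ℕ → ℕ) (L : ℕ)
    {n : ℕ} (S : Fin n → (ℕ → ℝ) × (ℕ → ℝ)) (θ : NNParams) : Prop :=
  ∀ l, 1 ≤ l → l ≤ L →
    (∀ i < m l, ∀ j < m (l - 1),
      deriv (fun t => empRisk σ ℓ m L S (updW θ l i j t)) ((θ l).1 i j) = 0) ∧
    (∀ i < m l,
      deriv (fun t => empRisk σ ℓ m L S (updB θ l i t)) ((θ l).2 i) = 0)

/-- Feature gradients `g^[l]_θ(x)`: `g^[L] = 1` and `g^[l] = σ'(W^[l] f^[l-1] + b^[l])`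
for `l ≤ L-1`; coordinates outside the layer width are `0`. -/
noncomputable def featGrad (σ : ℝ → ℝ) (m : ℕ → ℕ) (L : ℕ) (θ : NNParams) (x : ℕ → ℝ)
    (l i : ℕ) : ℝ :=
  if i < m l then (if l = L then 1 else deriv σ (preAct σ m L θ x l i)) else 0

/-- Auxiliary downward recursion for error vectors: `errVecAux … k = z^[L-k]`. -/
noncomputable def errVecAux (σ : ℝ → ℝ) (ℓ : (ℕ → ℝ) → (ℕ → ℝ) → ℝ) (m : ℕ → ℕ) (L : ℕ)
    (θ : NNParams) (x y : ℕ → ℝ) : ℕ → ℕ → ℝ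
  | 0 => fun i =>
      if i < m L then
        deriv (fun t => ℓ (Function.update (nnOut σ m L θ x) i t) y) (nnOut σ m L θ x i)
      else 0
  | k + 1 => fun i =>
      if i < m (L - (k + 1)) then
        ∑ p ∈ Finset.range (m (L - k)),
          (θ (L - k)).1 p i * (errVecAux σ ℓ m L θ x y k p * featGrad σ m L θ x (L - k) p)
      else 0

/-- Error vectors `z^[l]_θ(x)`: `z^[L] = ∇_f ℓ(f_θ(x), y)` and
`z^[l] = (W^[l+1])ᵀ (z^[l+1] ∘ g^[l+1])`. -/
noncomputable def errVec (σ : ℝ → ℝ) (ℓ : (ℕ → ℝ) → (ℕ → ℝ) → ℝ) (m : ℕ → ℕ) (L : ℕ)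
    (θ : NNParams) (x y : ℕ → ℝ) (l : ℕ) : ℕ → ℝ :=
  errVecAux σ ℓ m L θ x y (L - l)

/-- A list of insertion positions/widths `(q, mh)` describes a valid chain of
one-layer-deeper insertions starting from widths `m` and depth `L`. -/
def ValidChain (m : ℕ → ℕ) (L : ℕ) : List (ℕ × ℕ) → Prop
  | [] => True
  | (q, mh) :: rest =>
      1 ≤ q ∧ q + 1 ≤ L ∧ min (m q) (m (q + 1)) ≤ mh ∧
        ValidChain (insertWidth m q mh) (L + 1) rest

/-- The widths obtained after performing a chain of insertions. -/
def chainWidths (m : ℕ → ℕ) : List (ℕ × ℕ) → (ℕ → ℕ)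
  | [] => m
  | (q, mh) :: rest => chainWidths (insertWidth m q mh) rest

/-- Multi-layer lifting: the composition of the one-layer liftings along a chain of
insertions. -/
def liftChain (σ : ℝ → ℝ) {n : ℕ} (S : Fin n → (ℕ → ℝ) × (ℕ → ℝ)) :
    (ℕ → ℕ) → ℕ → List (ℕ × ℕ) → NNParams → Set NNParams
  | _, _, [], θ => {θ}
  | m, L, (q, mh) :: rest, θ =>
      {θ'' | ∃ θ', θ' ∈ liftSet σ m L q mh S θ ∧
        θ'' ∈ liftChain σ S (insertWidth m q mh) (L + 1) rest θ'}

/-- `NN'` (widths `m'`, depth `L + J`) is `J`-layer deeper than `NN` (widths `m`,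
depth `L`): it is obtained by `J` successive one-layer insertions, each inserted
layer having width at least the minimum of the widths of its neighboring layers. -/
def JDeeper : ℕ → (ℕ → ℕ) → ℕ → (ℕ → ℕ) → Prop
  | 0, m, L, m' => ∀ l ≤ L, m' l = m l
  | J + 1, m, L, m' =>
      ∃ mmid, JDeeper J m L mmid ∧
        ∃ q mh, 1 ≤ q ∧ q + 1 ≤ L + J ∧ min (mmid q) (mmid (q + 1)) ≤ mh ∧
          ∀ l ≤ L + J + 1, m' l = insertWidth mmid q mh l

/-! The inserted layer `x ↦ ξ x + β` maps every feature value of layer `q` on the data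
affinely from `[x_min, x_max]` onto `[x_low, x_up] ⊂ (a, b)`, so on the data it acts
through the affine piece `λ t + μ` of `σ`; rescaling the next layer by `1 / (λ ξ)` and
correcting its bias then undoes this affine map. -/

lemma feat_congr {σ : ℝ → ℝ} {m m' : ℕ → ℕ} {L L' q : ℕ} {θ θ' : NNParams}
    (x : ℕ → ℝ) (hm : ∀ l ≤ q, m' l = m l) (hθ : ∀ l, 1 ≤ l → l ≤ q → θ' l = θ l)
    (hqL : q < L) (hqL' : q < L') :
    ∀ l ≤ q, feat σ m' L' θ' x l = feat σ m L θ x l := by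
  intro l
  induction l with
  | zero =>
    intro _
    funext i
    simp [feat, hm 0 (Nat.zero_le _)]
  | succ l ih =>
    intro hl
    funext i
    simp only [feat, hm (l + 1) hl, hm l (by omega), if_neg (show l + 1 ≠ L' by omega),
      if_neg (show l + 1 ≠ L by omega), hθ (l + 1) (by omega) hl, ih (by omega)]

lemma rescale_mem_Icc {xmin xmax xlow xup v : ℝ} (hx : xmin < xmax) (hlu : xlow ≤ xup)
    (hv : v ∈ Set.Icc xmin xmax) :
    (xup - xlow) / (xmax - xmin) * v + (xlow - (xup - xlow) / (xmax - xmin) * xmin)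
      ∈ Set.Icc xlow xup := by
  set ξ := (xup - xlow) / (xmax - xmin)
  have hξ : 0 ≤ ξ := div_nonneg (by linarith) (by linarith)
  have hξspan : ξ * (xmax - xmin) = xup - xlow := div_mul_cancel₀ _ (by linarith)
  have hlo : 0 ≤ ξ * (v - xmin) := mul_nonneg hξ (by linarith [hv.1])
  have hhi : ξ * (v - xmin) ≤ ξ * (xmax - xmin) := by gcongr; linarith [hv.2]
  constructor <;> nlinarith

noncomputable def insertScaledIdentity (θ : NNParams) (q w : ℕ) (lam mu ξ β : ℝ) : NNParams :=
  fun l =>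
    if l = q + 1 then
      ((fun i j => if i = j then ξ else 0), fun _ => β)
    else if l = q + 2 then
      ((fun i j => 1 / (lam * ξ) * (θ (q + 1)).1 i j),
       fun i => (θ (q + 1)).2 i
          - (∑ j ∈ Finset.range w, 1 / (lam * ξ) * (θ (q + 1)).1 i j) * (lam * β + mu))
    else if l ≤ q then θ l
    else θ (l - 1)

namespace insertScaledIdentity

variable {θ : NNParams} {q w : ℕ} {lam mu ξ β : ℝ}

lemma apply_of_le {l : ℕ} (hl : l ≤ q) : insertScaledIdentity θ q w lam mu ξ β l = θ l := by
  simp [insertScaledIdentity, hl, show l ≠ q + 1 by omega, show l ≠ q + 2 by omega]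

lemma apply_of_ge {l : ℕ} (hl : q + 3 ≤ l) :
    insertScaledIdentity θ q w lam mu ξ β l = θ (l - 1) := by
  simp [insertScaledIdentity, show l ≠ q + 1 by omega, show l ≠ q + 2 by omega,
    show ¬l ≤ q by omega]

lemma localInLayer (m : ℕ → ℕ) (L : ℕ) :
    LocalInLayer m L q θ (insertScaledIdentity θ q w lam mu ξ β) := by
  constructor
  · intro l _ hl
    simp [apply_of_le hl]
  · intro l hl _
    simp [apply_of_ge hl]

lemma preAct_inserted {σ : ℝ → ℝ} {m : ℕ → ℕ} {L : ℕ} (x : ℕ → ℝ) (hqL : q < L)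
    {j : ℕ} (hj : j < m q) :
    preAct σ (insertWidth m q w) (L + 1) (insertScaledIdentity θ q w lam mu ξ β) x (q + 1) j
      = ξ * feat σ m L θ x q j + β := by
  have hfeat : feat σ (insertWidth m q w) (L + 1) (insertScaledIdentity θ q w lam mu ξ β) x q
      = feat σ m L θ x q :=
    feat_congr x (fun l hl => by simp [insertWidth, hl]) (fun l _ hl => apply_of_le hl) hqL
      (by omega) q le_rfl
  simp [preAct, insertScaledIdentity, insertWidth, hfeat, ite_mul, Finset.sum_ite_eq, hj]

lemma outputPres {m : ℕ → ℕ} (hw : m q ≤ w) (hlam : lam ≠ 0) (hξ : ξ ≠ 0) :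
    OutputPres m q w θ (insertScaledIdentity θ q w lam mu ξ β) (fun _ => lam) (fun _ => mu) := by
  constructor
  · intro i _ k hk
    have hcancel : 1 / (lam * ξ) * (θ (q + 1)).1 i k * (lam * ξ) = (θ (q + 1)).1 i k := by
      field_simp
    simpa [insertScaledIdentity, mul_ite, Finset.sum_ite_eq', show k < w by omega]
      using hcancel
  · intro i _
    simp only [insertScaledIdentity, if_pos, if_neg (show q + 2 ≠ q + 1 by omega)]
    rw [← Finset.sum_mul]
    ring

theorem mem_liftSet {σ : ℝ → ℝ} {m : ℕ → ℕ} {L : ℕ} {a b : ℝ} {n : ℕ}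
    {S : Fin n → (ℕ → ℝ) × (ℕ → ℝ)} (hqL : q < L) (hσ : AffineSubdomain σ a b lam mu)
    (hξ : ξ ≠ 0) (hdata : ∀ i : Fin n, ∀ j < m q, ξ * feat σ m L θ (S i).1 q j + β ∈ Set.Ioo a b) :
    insertScaledIdentity θ q (m q) lam mu ξ β ∈ liftSet σ m L q (m q) S θ :=
  ⟨fun _ => lam, fun _ => mu, fun _ => a, fun _ => b, localInLayer m L,
    fun j hj => ⟨hσ, fun i => preAct_inserted (S i).1 hqL hj ▸ hdata i j hj⟩,
    outputPres le_rfl hσ.2.1 hξ⟩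

end insertScaledIdentity

theorem explicit_lifting_narrow_input_general
    (σ : ℝ → ℝ) (m : ℕ → ℕ) (L q : ℕ)
    (hqL : q + 1 ≤ L)
    (a b lam mu : ℝ) (hσ : AffineSubdomain σ a b lam mu)
    (xlow xup : ℝ) (hal : a < xlow) (hlu : xlow < xup) (hub : xup < b)
    {n : ℕ} (S : Fin n → (ℕ → ℝ) × (ℕ → ℝ)) (θ : NNParams)
    (xmin xmax : ℝ)
    (hmin : IsLeast
      {v : ℝ | ∃ i : Fin n, ∃ j < m q, v = feat σ m L θ (S i).1 q j} xmin)
    (hmax : IsGreatest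
      {v : ℝ | ∃ i : Fin n, ∃ j < m q, v = feat σ m L θ (S i).1 q j} xmax)
    (hne : xmin ≠ xmax) :
    (fun l =>
      if l = q + 1 then
        ((fun i j => if i = j then (xup - xlow) / (xmax - xmin) else 0),
         (fun _ => xlow - (xup - xlow) / (xmax - xmin) * xmin))
      else if l = q + 2 then
        ((fun i j => 1 / (lam * ((xup - xlow) / (xmax - xmin))) * (θ (q + 1)).1 i j),
         (fun i => (θ (q + 1)).2 i
            - (∑ j ∈ Finset.range (m q),
                1 / (lam * ((xup - xlow) / (xmax - xmin))) * (θ (q + 1)).1 i j)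
              * (lam * (xlow - (xup - xlow) / (xmax - xmin) * xmin) + mu)))
      else if l ≤ q then θ l
      else θ (l - 1) : NNParams)
      ∈ liftSet σ m L q (m q) S θ := by
  have hx : xmin < xmax := lt_of_le_of_ne (hmin.2 hmax.1) hne
  have hξ : (xup - xlow) / (xmax - xmin) ≠ 0 := (div_pos (by linarith) (by linarith)).ne'
  refine insertScaledIdentity.mem_liftSet (by omega) hσ hξ fun i j hj => ?_
  have hv : feat σ m L θ (S i).1 q j ∈ Set.Icc xmin xmax :=
    ⟨hmin.2 ⟨i, j, hj, rfl⟩, hmax.2 ⟨i, j, hj, rfl⟩⟩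
  exact Set.Icc_subset_Ioo hal hub (rescale_mem_Icc hx hlu.le hv)

/-- **Explicit construction of a lifted parameter (narrow input case,
`m q ≤ m (q+1)`, inserted width `mh = m q`).**  With
`ξ = (x_up - x_low)/(x_max - x_min)`, `W'^[q̂] = ξ I`,
`b'^[q̂] = (x_low - ξ x_min) 1`, `W'^[q+1] = (1/(λξ)) W^[q+1]` and
`b'^[q+1] = b^[q+1] - W'^[q+1] (λ b'^[q̂] + μ 1)`, the resulting parameter lies in
`T_S(θ)`. -/
theorem explicit_lifting_narrow_input
    (σ : ℝ → ℝ) (m : ℕ → ℕ) (L q : ℕ)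
    (hq : 1 ≤ q) (hqL : q + 1 ≤ L)
    (hw : m q ≤ m (q + 1))
    (a b lam mu : ℝ) (hσ : AffineSubdomain σ a b lam mu)
    (xlow xup : ℝ) (hal : a < xlow) (hlu : xlow < xup) (hub : xup < b)
    {n : ℕ} (S : Fin n → (ℕ → ℝ) × (ℕ → ℝ)) (θ : NNParams)
    (xmin xmax : ℝ)
    (hmin : IsLeast
      {v : ℝ | ∃ i : Fin n, ∃ j < m q, v = feat σ m L θ (S i).1 q j} xmin)
    (hmax : IsGreatest
      {v : ℝ | ∃ i : Fin n, ∃ j < m q, v = feat σ m L θ (S i).1 q j} xmax)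
    (hne : xmin ≠ xmax) :
    (fun l =>
      if l = q + 1 then
        ((fun i j => if i = j then (xup - xlow) / (xmax - xmin) else 0),
         (fun _ => xlow - (xup - xlow) / (xmax - xmin) * xmin))
      else if l = q + 2 then
        ((fun i j => 1 / (lam * ((xup - xlow) / (xmax - xmin))) * (θ (q + 1)).1 i j),
         (fun i => (θ (q + 1)).2 i
            - (∑ j ∈ Finset.range (m q),
                1 / (lam * ((xup - xlow) / (xmax - xmin))) * (θ (q + 1)).1 i j)
              * (lam * (xlow - (xup - xlow) / (xmax - xmin) * xmin) + mu)))
      else if l ≤ q then θ l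
      else θ (l - 1) : NNParams)
      ∈ liftSet σ m L q (m q) S θ :=
  explicit_lifting_narrow_input_general σ m L q hqL a b lam mu hσ xlow xup hal hlu hub S θ xmin xmax
    hmin hmax hne
end

section
/- The lifting conditions imply that the composed inserted and following layers reproduce layer q+1: Given data S, a fully-connected NN, a one-layer deeper NN′, a parameter θ of NN, and any θ′ ∈ T_S(θ) with slope and intercept vectors λ, μ, for every x ∈ S_x one has σ(W′^[q+1] σ(W′^[q̂] f^[q]_θ(x) + b′^[q̂]) + b′^[q+1]) = σ(W^[q+1] f^[q]_θ(x) + b^[q+1]) (with σ applied componentwise; when q+1 = L the outer σ is omitted on both sides). In particular f^[q+1]_{θ′}(x) = f^[q+1]_θ(x) for all x ∈ S_x. -/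
/-!
On the training inputs every unit of the inserted layer has its pre-activation inside an
affine piece of `σ`, so the inserted layer acts as the affine map `z ↦ diag(λ) z + μ`.
Composing it with the following layer gives the affine map with weight
`W'^[q+1] diag(λ) W'^[q̂]` and bias `W'^[q+1] (diag(λ) b'^[q̂] + μ) + b'^[q+1]`, which the
output preserving condition identifies with `(W^[q+1], b^[q+1])`. The layers below `q` are
inherited, so both networks feed the same `f^[q]_θ(x)` into this composition.
-/

theorem Finset.sum_mul_comp_affine {ι κ : Type*} {s : Finset ι} {t : Finset κ} {σ : ℝ → ℝ}
    {lam mu b : ι → ℝ} {W : ι → κ → ℝ} {f : κ → ℝ} (w : ι → ℝ)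
    (hσ : ∀ j ∈ s, σ (∑ k ∈ t, W j k * f k + b j)
      = lam j * (∑ k ∈ t, W j k * f k + b j) + mu j) :
    ∑ j ∈ s, w j * σ (∑ k ∈ t, W j k * f k + b j)
      = ∑ k ∈ t, (∑ j ∈ s, w j * (lam j * W j k)) * f k
        + ∑ j ∈ s, w j * (lam j * b j + mu j) := by
  have hterm : ∀ j ∈ s, w j * σ (∑ k ∈ t, W j k * f k + b j)
      = ∑ k ∈ t, w j * (lam j * W j k) * f k + w j * (lam j * b j + mu j) := fun j hj => by
    have hfactor : ∑ k ∈ t, w j * (lam j * W j k) * f k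
        = w j * (lam j * ∑ k ∈ t, W j k * f k) := by
      rw [Finset.mul_sum, Finset.mul_sum]
      exact Finset.sum_congr rfl fun _ _ => by ring
    rw [hσ j hj, hfactor]
    ring
  rw [Finset.sum_congr rfl hterm, Finset.sum_add_distrib, Finset.sum_comm]
  simp only [Finset.sum_mul]

section insertWidth

variable (m : ℕ → ℕ) (q mh : ℕ)

theorem insertWidth_of_le {l : ℕ} (hl : l ≤ q) : insertWidth m q mh l = m l := by
  simp [insertWidth, hl]

@[simp]
theorem insertWidth_self : insertWidth m q mh q = m q :=
  insertWidth_of_le m q mh le_rfl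

@[simp]
theorem insertWidth_add_one : insertWidth m q mh (q + 1) = mh := by
  simp [insertWidth]

@[simp]
theorem insertWidth_add_two : insertWidth m q mh (q + 2) = m (q + 1) := by
  simp [insertWidth]

end insertWidth

theorem feat_succ_of_lt {σ : ℝ → ℝ} {m : ℕ → ℕ} {L : ℕ} {θ : NNParams} {x : ℕ → ℝ}
    {l i : ℕ} (hi : i < m (l + 1)) :
    feat σ m L θ x (l + 1) i = (if l + 1 = L then id else σ) (preAct σ m L θ x (l + 1) i) := by
  simp only [feat, if_pos hi, preAct, Nat.add_sub_cancel]

section Lifting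

variable {σ : ℝ → ℝ} {m : ℕ → ℕ} {L q mh : ℕ} {θ θ' : NNParams}

theorem feat_insertWidth_of_le (hqL : q + 1 ≤ L) (hloc : LocalInLayer m L q θ θ')
    (x : ℕ → ℝ) {l : ℕ} (hl : l ≤ q) :
    feat σ (insertWidth m q mh) (L + 1) θ' x l = feat σ m L θ x l := by
  induction l with
  | zero =>
    funext i
    simp [feat, insertWidth]
  | succ l ih =>
    funext i
    have hlow := ih (by omega)
    obtain ⟨hW, hb⟩ := hloc.1 (l + 1) (by omega) hl
    simp only [feat, insertWidth_of_le m q mh hl, insertWidth_of_le m q mh (l.le_succ.trans hl),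
      hlow, if_neg (show l + 1 ≠ L + 1 by omega), if_neg (show l + 1 ≠ L by omega)]
    split_ifs with hi
    · rw [hb i hi, Finset.sum_congr rfl fun j hj => by rw [hW i hi j (Finset.mem_range.mp hj)]]
    · rfl

theorem preAct_insertWidth_add_one (hqL : q + 1 ≤ L) (hloc : LocalInLayer m L q θ θ')
    (x : ℕ → ℝ) (j : ℕ) :
    preAct σ (insertWidth m q mh) (L + 1) θ' x (q + 1) j
      = ∑ k ∈ Finset.range (m q), (θ' (q + 1)).1 j k * feat σ m L θ x q k
        + (θ' (q + 1)).2 j := by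
  simp only [preAct, Nat.add_sub_cancel, insertWidth_self,
    feat_insertWidth_of_le hqL hloc x le_rfl]

theorem feat_insertWidth_add_one (hqL : q + 1 ≤ L) (hloc : LocalInLayer m L q θ θ')
    (x : ℕ → ℝ) {j : ℕ} (hj : j < mh) :
    feat σ (insertWidth m q mh) (L + 1) θ' x (q + 1) j
      = σ (∑ k ∈ Finset.range (m q), (θ' (q + 1)).1 j k * feat σ m L θ x q k
          + (θ' (q + 1)).2 j) := by
  rw [feat_succ_of_lt (m := insertWidth m q mh) (by simpa using hj), if_neg (by omega),
    preAct_insertWidth_add_one hqL hloc]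

end Lifting

theorem composed_layers_reproduce_next_layer_general
    (σ : ℝ → ℝ) (m : ℕ → ℕ) (L q mh : ℕ)
    (hqL : q + 1 ≤ L)
    {n : ℕ} (S : Fin n → (ℕ → ℝ) × (ℕ → ℝ)) (θ θ' : NNParams)
    (lam mu aa bb : ℕ → ℝ)
    (hwit : LiftWitness σ m L q mh S θ θ' lam mu aa bb) :
    ∀ i : Fin n, ∀ idx < m (q + 1),
      (if q + 1 = L then id else σ)
          ((∑ j ∈ Finset.range mh, (θ' (q + 2)).1 idx j *
              σ ((∑ k ∈ Finset.range (m q),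
                    (θ' (q + 1)).1 j k * feat σ m L θ (S i).1 q k)
                  + (θ' (q + 1)).2 j))
            + (θ' (q + 2)).2 idx)
        = (if q + 1 = L then id else σ) (preAct σ m L θ (S i).1 (q + 1) idx) ∧
      feat σ (insertWidth m q mh) (L + 1) θ' (S i).1 (q + 2) idx
        = feat σ m L θ (S i).1 (q + 1) idx := by
  obtain ⟨hloc, hlin, hW, hb⟩ := hwit
  intro i idx hidx
  have hlinear : ∀ j ∈ Finset.range mh,
      σ (∑ k ∈ Finset.range (m q), (θ' (q + 1)).1 j k * feat σ m L θ (S i).1 q k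
          + (θ' (q + 1)).2 j)
        = lam j * (∑ k ∈ Finset.range (m q), (θ' (q + 1)).1 j k * feat σ m L θ (S i).1 q k
          + (θ' (q + 1)).2 j) + mu j := fun j hj => by
    obtain ⟨⟨-, -, haffine⟩, hmem⟩ := hlin j (Finset.mem_range.mp hj)
    exact haffine _ (preAct_insertWidth_add_one hqL hloc _ j ▸ hmem i)
  have hcomposed : ∑ j ∈ Finset.range mh, (θ' (q + 2)).1 idx j *
        σ (∑ k ∈ Finset.range (m q), (θ' (q + 1)).1 j k * feat σ m L θ (S i).1 q k
          + (θ' (q + 1)).2 j) + (θ' (q + 2)).2 idx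
      = preAct σ m L θ (S i).1 (q + 1) idx := by
    rw [Finset.sum_mul_comp_affine _ hlinear, add_assoc, hb idx hidx, preAct,
      Nat.add_sub_cancel,
      Finset.sum_congr rfl fun k hk => by rw [hW idx hidx k (Finset.mem_range.mp hk)]]
  refine ⟨congrArg _ hcomposed, ?_⟩
  rw [feat_succ_of_lt hidx,
    feat_succ_of_lt (m := insertWidth m q mh) (by simpa using hidx), ← hcomposed,
    preAct, show q + 2 - 1 = q + 1 by omega, insertWidth_add_one,
    Finset.sum_congr rfl fun j hj => by
      rw [feat_insertWidth_add_one hqL hloc _ (Finset.mem_range.mp hj)]]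
  simp only [Nat.add_right_cancel_iff]

/-- **The lifting conditions imply that the composed inserted and following layers
reproduce layer `q+1`.**  For any lift witness, on every training input
`σ(W'^[q+1] σ(W'^[q̂] f^[q]_θ(x) + b'^[q̂]) + b'^[q+1]) = σ(W^[q+1] f^[q]_θ(x) + b^[q+1])`
(the outer `σ` omitted when `q+1 = L`); in particular
`f^[q+1]_{θ'}(x) = f^[q+1]_θ(x)`. -/
theorem composed_layers_reproduce_next_layer
    (σ : ℝ → ℝ) (m : ℕ → ℕ) (L q mh : ℕ)
    (hq : 1 ≤ q) (hqL : q + 1 ≤ L)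
    (hmh : min (m q) (m (q + 1)) ≤ mh)
    {n : ℕ} (S : Fin n → (ℕ → ℝ) × (ℕ → ℝ)) (θ θ' : NNParams)
    (lam mu aa bb : ℕ → ℝ)
    (hwit : LiftWitness σ m L q mh S θ θ' lam mu aa bb) :
    ∀ i : Fin n, ∀ idx < m (q + 1),
      (if q + 1 = L then id else σ)
          ((∑ j ∈ Finset.range mh, (θ' (q + 2)).1 idx j *
              σ ((∑ k ∈ Finset.range (m q),
                    (θ' (q + 1)).1 j k * feat σ m L θ (S i).1 q k)
                  + (θ' (q + 1)).2 j))
            + (θ' (q + 2)).2 idx)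
        = (if q + 1 = L then id else σ) (preAct σ m L θ (S i).1 (q + 1) idx) ∧
      feat σ (insertWidth m q mh) (L + 1) θ' (S i).1 (q + 2) idx
        = feat σ m L θ (S i).1 (q + 1) idx :=
  composed_layers_reproduce_next_layer_general σ m L q mh hqL S θ θ' lam mu aa bb hwit
end

section
/- Existence of multi-layer lifting: Given data S, any fully-connected network NN with widths {m_l}_{l=0}^L, and any network NN′ that is J-layer deeper than NN (obtained by J ≥ 1 successive one-layer insertions, each inserted layer of width at least the minimum of the widths of its two neighboring layers), the J-step composition T_S = T^J_S ∘ ⋯ ∘ T^1_S of one-layer liftings is nonempty-valued: T_S(θ) ≠ ∅ for every parameter θ of NN. Moreover, every θ′ ∈ T_S(θ) satisfies f_{θ′}(x) = f_θ(x) for all x ∈ S_x. -/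
/-! ### Auxiliary lemmas for the main theorem -/

lemma insertWidth_le' {m : ℕ → ℕ} {q mh l : ℕ} (h : l ≤ q) :
    insertWidth m q mh l = m l := if_pos h

lemma insertWidth_mid' (m : ℕ → ℕ) (q mh : ℕ) : insertWidth m q mh (q + 1) = mh := by
  unfold insertWidth; rw [if_neg (by omega), if_pos rfl]

lemma insertWidth_high' {m : ℕ → ℕ} {q mh l : ℕ} (h : q + 2 ≤ l) :
    insertWidth m q mh l = m (l - 1) := by
  unfold insertWidth; rw [if_neg (by omega), if_neg (by omega)]

lemma feat_zero (σ : ℝ → ℝ) (m : ℕ → ℕ) (L : ℕ) (θ : NNParams) (x : ℕ → ℝ)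
    (l i : ℕ) (h : ¬ i < m l) : feat σ m L θ x l i = 0 := by
  cases l <;> simp [feat, h]

/-- Lower layers (up to `q`) of two networks agreeing there have equal features. -/
lemma feat_eq_low (σ : ℝ → ℝ) (m m' : ℕ → ℕ) (L L' q : ℕ) (θ θ' : NNParams) (x : ℕ → ℝ)
    (hm : ∀ l ≤ q, m' l = m l)
    (hw : ∀ l, 1 ≤ l → l ≤ q →
      (∀ i < m l, ∀ j < m (l - 1), (θ' l).1 i j = (θ l).1 i j) ∧
      (∀ i < m l, (θ' l).2 i = (θ l).2 i))
    (hqL : q < L) (hqL' : q < L') :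
    ∀ l ≤ q, feat σ m' L' θ' x l = feat σ m L θ x l := by
  intro l
  induction l with
  | zero => intro _; funext i; simp [feat, hm 0 (Nat.zero_le _)]
  | succ l ih =>
    intro hl
    have hprev := ih (Nat.le_of_succ_le hl)
    funext i
    simp only [feat]
    rw [hm (l + 1) hl]
    by_cases hi : i < m (l + 1)
    · rw [if_pos hi, if_pos hi, if_neg (by omega : ¬ l + 1 = L),
        if_neg (by omega : ¬ l + 1 = L'), hm l (by omega)]
      have hww := (hw (l + 1) (by omega) hl).1 i hi
      have hbb := (hw (l + 1) (by omega) hl).2 i hi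
      simp only [Nat.add_sub_cancel] at hww
      congr 1
      rw [hbb, hprev]
      congr 1
      exact Finset.sum_congr rfl fun j hj => by
        rw [hww j (Finset.mem_range.mp hj)]
    · rw [if_neg hi, if_neg hi]
lemma feat_succ (σ : ℝ → ℝ) (m : ℕ → ℕ) (L : ℕ) (θ : NNParams) (x : ℕ → ℝ) (l i : ℕ) :
    feat σ m L θ x (l + 1) i
      = if i < m (l + 1) then
          (if l + 1 = L then id else σ)
            ((∑ j ∈ Finset.range (m l), (θ (l + 1)).1 i j * feat σ m L θ x l j)
              + (θ (l + 1)).2 i)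
        else 0 := rfl

/-- Any one-layer lifting preserves the network function on the data. -/
lemma liftSet_preserves (σ : ℝ → ℝ) (m : ℕ → ℕ) (L q mh : ℕ) {n : ℕ}
    (S : Fin n → (ℕ → ℝ) × (ℕ → ℝ)) (θ θ' : NNParams)
    (hq : 1 ≤ q) (hqL : q + 1 ≤ L)
    (hθ' : θ' ∈ liftSet σ m L q mh S θ) (i : Fin n) :
    nnOut σ (insertWidth m q mh) (L + 1) θ' (S i).1 = nnOut σ m L θ (S i).1 := by
  obtain ⟨lam, mu, aa, bb, hloc, hlin, hout⟩ := hθ'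
  set x := (S i).1 with hxdef
  set m' := insertWidth m q mh with hm'def
  have hmq : m' q = m q := insertWidth_le' (le_refl q)
  have hmmid : m' (q + 1) = mh := insertWidth_mid' m q mh
  have hmhigh : ∀ l, q + 2 ≤ l → m' l = m (l - 1) := fun l hl => insertWidth_high' hl
  -- lower layers agree
  have hlow : ∀ l ≤ q, feat σ m' (L + 1) θ' x l = feat σ m L θ x l :=
    feat_eq_low σ m m' L (L + 1) q θ θ' x (fun l hl => insertWidth_le' hl)
      hloc.1 (by omega) (by omega)
  -- the inserted layer computes an affine function of the old layer-q features
  have hmid1 : ∀ k < mh, feat σ m' (L + 1) θ' x (q + 1) k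
      = lam k * ((∑ p ∈ Finset.range (m q), (θ' (q + 1)).1 k p * feat σ m L θ x q p)
          + (θ' (q + 1)).2 k) + mu k := by
    intro k hk
    obtain ⟨⟨hab, hlam0, hσ⟩, hmem⟩ := hlin k hk
    have hpre := hmem i
    rw [← hxdef] at hpre
    have hpa : preAct σ m' (L + 1) θ' x (q + 1) k
        = (∑ p ∈ Finset.range (m q), (θ' (q + 1)).1 k p * feat σ m L θ x q p)
          + (θ' (q + 1)).2 k := by
      unfold preAct
      simp only [Nat.add_sub_cancel]
      rw [hmq, hlow q (le_refl q)]
    rw [feat_succ, if_pos (by rw [hmmid]; exact hk),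
      if_neg (by omega : ¬ q + 1 = L + 1)]
    have heq : (∑ j ∈ Finset.range (m' q), (θ' (q + 1)).1 k j * feat σ m' (L + 1) θ' x q j)
        + (θ' (q + 1)).2 k = preAct σ m' (L + 1) θ' x (q + 1) k := by
      unfold preAct; simp only [Nat.add_sub_cancel]
    rw [heq, hσ _ hpre, hpa]
  -- features at deep layer `q+2` equal shallow features at layer `q+1`
  have hmid : feat σ m' (L + 1) θ' x (q + 2) = feat σ m L θ x (q + 1) := by
    funext j
    by_cases hj : j < m (q + 1)
    · have hm2 : m' (q + 1 + 1) = m (q + 1) := hmhigh (q + 2) (by omega)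
      have hout1 : ∀ p < m q,
          (∑ k ∈ Finset.range mh, (θ' (q + 1 + 1)).1 j k * (lam k * (θ' (q + 1)).1 k p))
            = (θ (q + 1)).1 j p := fun p hp => hout.1 j hj p hp
      have hout2 : (∑ k ∈ Finset.range mh,
            (θ' (q + 1 + 1)).1 j k * (lam k * (θ' (q + 1)).2 k + mu k))
          + (θ' (q + 1 + 1)).2 j = (θ (q + 1)).2 j := hout.2 j hj
      have hact : (if q + 1 + 1 = L + 1 then (id : ℝ → ℝ) else σ)
          = (if q + 1 = L then id else σ) := by
        by_cases hL : q + 1 = L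
        · rw [if_pos hL, if_pos (by omega)]
        · rw [if_neg hL, if_neg (by omega)]
      have key : (∑ k ∈ Finset.range mh, (θ' (q + 1 + 1)).1 j k
            * feat σ m' (L + 1) θ' x (q + 1) k) + (θ' (q + 1 + 1)).2 j
          = (∑ p ∈ Finset.range (m q), (θ (q + 1)).1 j p * feat σ m L θ x q p)
            + (θ (q + 1)).2 j := by
        have step1 : ∀ k ∈ Finset.range mh, (θ' (q + 1 + 1)).1 j k
              * feat σ m' (L + 1) θ' x (q + 1) k
            = (∑ p ∈ Finset.range (m q),
                ((θ' (q + 1 + 1)).1 j k * (lam k * (θ' (q + 1)).1 k p))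
                  * feat σ m L θ x q p)
              + (θ' (q + 1 + 1)).1 j k * (lam k * (θ' (q + 1)).2 k + mu k) := by
          intro k hk
          rw [hmid1 k (Finset.mem_range.mp hk)]
          have h2 : (θ' (q + 1 + 1)).1 j k * lam k
                * (∑ p ∈ Finset.range (m q), (θ' (q + 1)).1 k p * feat σ m L θ x q p)
              = ∑ p ∈ Finset.range (m q),
                  ((θ' (q + 1 + 1)).1 j k * (lam k * (θ' (q + 1)).1 k p))
                    * feat σ m L θ x q p := by
            rw [Finset.mul_sum]
            exact Finset.sum_congr rfl fun p _ => by ring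
          rw [← h2]; ring
        rw [Finset.sum_congr rfl step1, Finset.sum_add_distrib, Finset.sum_comm]
        have step2 : ∀ p ∈ Finset.range (m q),
            (∑ k ∈ Finset.range mh,
              ((θ' (q + 1 + 1)).1 j k * (lam k * (θ' (q + 1)).1 k p))
                * feat σ m L θ x q p)
            = (θ (q + 1)).1 j p * feat σ m L θ x q p := by
          intro p hp
          rw [← Finset.sum_mul, hout1 p (Finset.mem_range.mp hp)]
        rw [Finset.sum_congr rfl step2, add_assoc, hout2]
      rw [show q + 2 = q + 1 + 1 from rfl, feat_succ, feat_succ,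
        if_pos (by rw [hm2]; exact hj), if_pos hj, hact, hmmid]
      exact congrArg _ key
    · rw [feat_zero σ m' (L + 1) θ' x (q + 2) j
          (by rw [hmhigh (q + 2) (by omega)]; simpa using hj),
        feat_zero σ m L θ x (q + 1) j hj]
  -- upward induction
  have hhigh : ∀ l, q + 2 ≤ l → l ≤ L + 1 →
      feat σ m' (L + 1) θ' x l = feat σ m L θ x (l - 1) := by
    intro l
    induction l with
    | zero => omega
    | succ l ih =>
      intro h1 h2
      rcases Nat.lt_or_ge (q + 2) (l + 1) with h | h
      · -- inductive step: l ≥ q + 2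
        have hprev := ih (by omega) (by omega)
        obtain ⟨k, rfl⟩ : ∃ k, l = k + 1 := ⟨l - 1, by omega⟩
        funext j
        by_cases hj : j < m (k + 1)
        · have hact : (if k + 1 + 1 = L + 1 then (id : ℝ → ℝ) else σ)
              = (if k + 1 = L then id else σ) := by
            by_cases hL : k + 1 = L
            · rw [if_pos hL, if_pos (by omega)]
            · rw [if_neg hL, if_neg (by omega)]
          have hloc2 := hloc.2 (k + 2) (by omega) (by omega)
          simp only [show k + 2 - 1 = k + 1 from rfl, show k + 2 - 2 = k from rfl] at hloc2
          have hW : ∀ p < m k, (θ' (k + 1 + 1)).1 j p = (θ (k + 1)).1 j p :=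
            fun p hp => hloc2.1 j hj p hp
          have hB : (θ' (k + 1 + 1)).2 j = (θ (k + 1)).2 j := hloc2.2 j hj
          have hprev' : feat σ m' (L + 1) θ' x (k + 1) = feat σ m L θ x k := by
            simpa using hprev
          have hw1 : m' (k + 1) = m k := by
            have := hmhigh (k + 1) (by omega); simpa using this
          have hw2 : m' (k + 1 + 1) = m (k + 1) := by
            have := hmhigh (k + 2) (by omega); simpa using this
          show feat σ m' (L + 1) θ' x (k + 1 + 1) j = feat σ m L θ x (k + 1 + 1 - 1) j
          rw [show k + 1 + 1 - 1 = k + 1 from rfl, feat_succ, feat_succ,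
            if_pos (by rw [hw2]; exact hj), if_pos hj, hact, hw1, hprev', hB]
          refine congrArg _ (congrArg (· + (θ (k + 1)).2 j) ?_)
          exact Finset.sum_congr rfl fun p hp => by
            rw [hW p (Finset.mem_range.mp hp)]
        · rw [feat_zero σ m' (L + 1) θ' x (k + 1 + 1) j
              (by rw [hmhigh (k + 1 + 1) (by omega)]; simpa using hj),
            feat_zero σ m L θ x (k + 1 + 1 - 1) j (by simpa using hj)]
      · -- base case: l + 1 = q + 2
        have hl : l = q + 1 := by omega
        subst hl
        simpa using hmid
  show feat σ m' (L + 1) θ' x (L + 1) = feat σ m L θ x L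
  have := hhigh (L + 1) (by omega) (le_refl _)
  simpa using this
lemma small_mem_Ioo {a b v M : ℝ} (hab : a < b) (hM : |v| ≤ M) :
    (b - a) / (4 * (M + 1)) * v + (a + b) / 2 ∈ Set.Ioo a b := by
  have hM0 : 0 ≤ M := le_trans (abs_nonneg v) hM
  have hpos : (0:ℝ) < (b - a) / (4 * (M + 1)) := by
    apply div_pos (by linarith) (by linarith)
  have h2 : |(b - a) / (4 * (M + 1)) * v| ≤ (b - a) / 4 := by
    rw [abs_mul, abs_of_pos hpos]
    calc (b - a) / (4 * (M + 1)) * |v| ≤ (b - a) / (4 * (M + 1)) * (M + 1) :=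
          mul_le_mul_of_nonneg_left (by linarith) (le_of_lt hpos)
      _ = (b - a) / 4 := by field_simp
    
  obtain ⟨hl, hr⟩ := abs_le.mp h2
  constructor <;> [nlinarith; nlinarith]

lemma small_ne_zero {a b M : ℝ} (hab : a < b) (hM0 : 0 ≤ M) :
    (b - a) / (4 * (M + 1)) ≠ 0 := by
  have : (0:ℝ) < (b - a) / (4 * (M + 1)) := div_pos (by linarith) (by linarith)
  exact ne_of_gt this

lemma abs_le_double_sum {n : ℕ} (f : Fin n → ℕ → ℝ) (mh : ℕ) (i : Fin n) {j : ℕ}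
    (hj : j < mh) :
    |f i j| ≤ ∑ i' : Fin n, ∑ j' ∈ Finset.range mh, |f i' j'| :=
  calc |f i j| ≤ ∑ j' ∈ Finset.range mh, |f i j'| :=
        Finset.single_le_sum (f := fun j' => |f i j'|)
          (fun _ _ => abs_nonneg _) (Finset.mem_range.mpr hj)
    _ ≤ ∑ i' : Fin n, ∑ j' ∈ Finset.range mh, |f i' j'| :=
        Finset.single_le_sum (f := fun i' => ∑ j' ∈ Finset.range mh, |f i' j'|)
          (fun _ _ => Finset.sum_nonneg fun _ _ => abs_nonneg _) (Finset.mem_univ i)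

lemma double_sum_abs_nonneg {n : ℕ} (f : Fin n → ℕ → ℝ) (mh : ℕ) :
    0 ≤ ∑ i' : Fin n, ∑ j' ∈ Finset.range mh, |f i' j'| :=
  Finset.sum_nonneg fun _ _ => Finset.sum_nonneg fun _ _ => abs_nonneg _
lemma liftSet_nonempty (σ : ℝ → ℝ) (m : ℕ → ℕ) (L q mh : ℕ) {n : ℕ}
    (S : Fin n → (ℕ → ℝ) × (ℕ → ℝ)) (θ : NNParams)
    (hq : 1 ≤ q) (hqL : q + 1 ≤ L) (hmh : min (m q) (m (q + 1)) ≤ mh)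
    (haff : ∃ a b lam mu : ℝ, AffineSubdomain σ a b lam mu) :
    (liftSet σ m L q mh S θ).Nonempty := by
  obtain ⟨a, b, lam0, mu0, hab, hlam0, hσ⟩ := haff
  rcases min_le_iff.mp hmh with hc | hc
  · -- Case 1 : m q ≤ mh, use a scaled identity as the inserted layer
    set M := ∑ i : Fin n, ∑ j ∈ Finset.range mh, |feat σ m L θ (S i).1 q j| with hMdef
    have hM0 : 0 ≤ M := double_sum_abs_nonneg _ mh
    set ε := (b - a) / (4 * (M + 1)) with hεdef
    have hε : ε ≠ 0 := small_ne_zero hab hM0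
    have hlε : lam0 * ε ≠ 0 := mul_ne_zero hlam0 hε
    set θ' : NNParams := fun l =>
      if l ≤ q then θ l
      else if l = q + 1 then
        (fun j k => if j = k then ε else 0, fun _ => (a + b) / 2)
      else if l = q + 2 then
        (fun i j => if j < m q then (θ (q + 1)).1 i j / (lam0 * ε) else 0,
         fun i => (θ (q + 1)).2 i - (lam0 * ((a + b) / 2) + mu0) *
           ∑ j ∈ Finset.range mh,
             (if j < m q then (θ (q + 1)).1 i j / (lam0 * ε) else 0))
      else θ (l - 1) with hθ'def
    have hθ'low : ∀ l ≤ q, θ' l = θ l := by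
      intro l hl; simp only [hθ'def]; rw [if_pos hl]
    have hθ'high : ∀ l, q + 3 ≤ l → θ' l = θ (l - 1) := by
      intro l hl; simp only [hθ'def]
      rw [if_neg (by omega), if_neg (by omega), if_neg (by omega)]
    have hW1 : ∀ j k, (θ' (q + 1)).1 j k = if j = k then ε else 0 := by
      intro j k; simp only [hθ'def]; simp
    have hb1 : ∀ j, (θ' (q + 1)).2 j = (a + b) / 2 := by
      intro j; simp only [hθ'def]; simp
    have hW2 : ∀ i j, (θ' (q + 2)).1 i j
        = if j < m q then (θ (q + 1)).1 i j / (lam0 * ε) else 0 := by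
      intro i j; simp only [hθ'def]
      simp
    have hb2 : ∀ i, (θ' (q + 2)).2 i
        = (θ (q + 1)).2 i - (lam0 * ((a + b) / 2) + mu0) *
            ∑ j ∈ Finset.range mh,
              (if j < m q then (θ (q + 1)).1 i j / (lam0 * ε) else 0) := by
      intro i; simp only [hθ'def]
      simp
    have hloc : LocalInLayer m L q θ θ' := by
      constructor
      · intro l h1 h2; rw [hθ'low l h2]; exact ⟨fun _ _ _ _ => rfl, fun _ _ => rfl⟩
      · intro l h1 h2; rw [hθ'high l h1]; exact ⟨fun _ _ _ _ => rfl, fun _ _ => rfl⟩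
    have hfl : ∀ i : Fin n, feat σ (insertWidth m q mh) (L + 1) θ' (S i).1 q
        = feat σ m L θ (S i).1 q := fun i =>
      feat_eq_low σ m (insertWidth m q mh) L (L + 1) q θ θ' (S i).1
        (fun l hl => insertWidth_le' hl) hloc.1 (by omega) (by omega) q (le_refl q)
    refine ⟨θ', fun _ => lam0, fun _ => mu0, fun _ => a, fun _ => b, hloc, ?_, ?_, ?_⟩
    · -- layer linearization
      intro j hj
      refine ⟨⟨hab, hlam0, hσ⟩, fun i => ?_⟩
      unfold preAct
      simp only [Nat.add_sub_cancel]
      rw [insertWidth_le' (le_refl q), hfl i]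
      simp only [hW1, hb1]
      have hterm : ∀ k ∈ Finset.range (m q),
          (if j = k then ε else 0) * feat σ m L θ (S i).1 q k
          = if j = k then ε * feat σ m L θ (S i).1 q k else 0 := by
        intro k _; split <;> simp
      rw [Finset.sum_congr rfl hterm, Finset.sum_ite_eq]
      have hsum : (if j ∈ Finset.range (m q) then ε * feat σ m L θ (S i).1 q j else 0)
          = ε * feat σ m L θ (S i).1 q j := by
        by_cases hjq : j < m q
        · rw [if_pos (Finset.mem_range.mpr hjq)]
        · rw [if_neg (fun hcon => hjq (Finset.mem_range.mp hcon)),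
            feat_zero σ m L θ (S i).1 q j hjq, mul_zero]
      rw [hsum]
      exact small_mem_Ioo hab
        (abs_le_double_sum (fun i' j' => feat σ m L θ (S i').1 q j') mh i hj)
    · -- output preserving : weights
      intro i hi k hk
      simp only [hW2, hW1]
      have hterm : ∀ j ∈ Finset.range mh,
          (if j < m q then (θ (q + 1)).1 i j / (lam0 * ε) else 0)
            * (lam0 * (if j = k then ε else 0))
          = if j = k then (θ (q + 1)).1 i k else 0 := by
        intro j _
        by_cases hjk : j = k
        · subst hjk
          rw [if_pos rfl, if_pos rfl, if_pos hk]
          field_simp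
        · rw [if_neg hjk, if_neg hjk, mul_zero, mul_zero]
      rw [Finset.sum_congr rfl hterm, Finset.sum_ite_eq',
        if_pos (Finset.mem_range.mpr (lt_of_lt_of_le hk hc))]
    · -- output preserving : biases
      intro i hi
      simp only [hW2, hW1, hb1, hb2]
      rw [← Finset.sum_mul]
      ring
  · -- Case 2 : m (q+1) ≤ mh, scale the old layer-(q+1) weights into the inserted layer
    set M := ∑ i : Fin n, ∑ j ∈ Finset.range mh, |preAct σ m L θ (S i).1 (q + 1) j|
      with hMdef
    have hM0 : 0 ≤ M := double_sum_abs_nonneg _ mh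
    set ε := (b - a) / (4 * (M + 1)) with hεdef
    have hε : ε ≠ 0 := small_ne_zero hab hM0
    have hlε : lam0 * ε ≠ 0 := mul_ne_zero hlam0 hε
    set θ' : NNParams := fun l =>
      if l ≤ q then θ l
      else if l = q + 1 then
        (fun j k => ε * (θ (q + 1)).1 j k, fun j => ε * (θ (q + 1)).2 j + (a + b) / 2)
      else if l = q + 2 then
        (fun i j => if i = j then 1 / (lam0 * ε) else 0,
         fun _ => -(lam0 * ((a + b) / 2) + mu0) / (lam0 * ε))
      else θ (l - 1) with hθ'def
    have hθ'low : ∀ l ≤ q, θ' l = θ l := by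
      intro l hl; simp only [hθ'def]; rw [if_pos hl]
    have hθ'high : ∀ l, q + 3 ≤ l → θ' l = θ (l - 1) := by
      intro l hl; simp only [hθ'def]
      rw [if_neg (by omega), if_neg (by omega), if_neg (by omega)]
    have hW1 : ∀ j k, (θ' (q + 1)).1 j k = ε * (θ (q + 1)).1 j k := by
      intro j k; simp only [hθ'def]; simp
    have hb1 : ∀ j, (θ' (q + 1)).2 j = ε * (θ (q + 1)).2 j + (a + b) / 2 := by
      intro j; simp only [hθ'def]; simp
    have hW2 : ∀ i j, (θ' (q + 2)).1 i j = if i = j then 1 / (lam0 * ε) else 0 := by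
      intro i j; simp only [hθ'def]
      simp
    have hb2 : ∀ i, (θ' (q + 2)).2 i = -(lam0 * ((a + b) / 2) + mu0) / (lam0 * ε) := by
      intro i; simp only [hθ'def]
      simp
    have hloc : LocalInLayer m L q θ θ' := by
      constructor
      · intro l h1 h2; rw [hθ'low l h2]; exact ⟨fun _ _ _ _ => rfl, fun _ _ => rfl⟩
      · intro l h1 h2; rw [hθ'high l h1]; exact ⟨fun _ _ _ _ => rfl, fun _ _ => rfl⟩
    have hfl : ∀ i : Fin n, feat σ (insertWidth m q mh) (L + 1) θ' (S i).1 q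
        = feat σ m L θ (S i).1 q := fun i =>
      feat_eq_low σ m (insertWidth m q mh) L (L + 1) q θ θ' (S i).1
        (fun l hl => insertWidth_le' hl) hloc.1 (by omega) (by omega) q (le_refl q)
    refine ⟨θ', fun _ => lam0, fun _ => mu0, fun _ => a, fun _ => b, hloc, ?_, ?_, ?_⟩
    · -- layer linearization
      intro j hj
      refine ⟨⟨hab, hlam0, hσ⟩, fun i => ?_⟩
      unfold preAct
      simp only [Nat.add_sub_cancel]
      rw [insertWidth_le' (le_refl q), hfl i]
      simp only [hW1, hb1]
      have hstep : ∑ k ∈ Finset.range (m q),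
            (ε * (θ (q + 1)).1 j k) * feat σ m L θ (S i).1 q k
          = ε * ∑ k ∈ Finset.range (m q), (θ (q + 1)).1 j k * feat σ m L θ (S i).1 q k := by
        rw [Finset.mul_sum]
        exact Finset.sum_congr rfl fun k _ => by ring
      rw [hstep]
      have hP : ε * (∑ k ∈ Finset.range (m q),
              (θ (q + 1)).1 j k * feat σ m L θ (S i).1 q k)
            + (ε * (θ (q + 1)).2 j + (a + b) / 2)
          = ε * preAct σ m L θ (S i).1 (q + 1) j + (a + b) / 2 := by
        unfold preAct
        simp only [Nat.add_sub_cancel]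
        ring
      rw [hP]
      exact small_mem_Ioo hab
        (abs_le_double_sum (fun i' j' => preAct σ m L θ (S i').1 (q + 1) j') mh i hj)
    · -- output preserving : weights
      intro i hi k hk
      simp only [hW2, hW1]
      have hterm : ∀ j ∈ Finset.range mh,
          (if i = j then 1 / (lam0 * ε) else 0) * (lam0 * (ε * (θ (q + 1)).1 j k))
          = if i = j then 1 / (lam0 * ε) * (lam0 * (ε * (θ (q + 1)).1 j k)) else 0 := by
        intro j _; rw [ite_mul, zero_mul]
      rw [Finset.sum_congr rfl hterm, Finset.sum_ite_eq,
        if_pos (Finset.mem_range.mpr (lt_of_lt_of_le hi hc))]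
      field_simp
    · -- output preserving : biases
      intro i hi
      simp only [hW2, hW1, hb1, hb2]
      have hterm : ∀ j ∈ Finset.range mh,
          (if i = j then 1 / (lam0 * ε) else 0)
            * (lam0 * (ε * (θ (q + 1)).2 j + (a + b) / 2) + mu0)
          = if i = j then 1 / (lam0 * ε)
              * (lam0 * (ε * (θ (q + 1)).2 j + (a + b) / 2) + mu0) else 0 := by
        intro j _; rw [ite_mul, zero_mul]
      rw [Finset.sum_congr rfl hterm, Finset.sum_ite_eq,
        if_pos (Finset.mem_range.mpr (lt_of_lt_of_le hi hc))]
      field_simp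
      ring
lemma liftChain_main (σ : ℝ → ℝ) {n : ℕ} (S : Fin n → (ℕ → ℝ) × (ℕ → ℝ))
    (haff : ∃ a b lam mu : ℝ, AffineSubdomain σ a b lam mu) :
    ∀ (qs : List (ℕ × ℕ)) (m : ℕ → ℕ) (L : ℕ) (θ : NNParams), ValidChain m L qs →
      (liftChain σ S m L qs θ).Nonempty ∧
      ∀ θ'' ∈ liftChain σ S m L qs θ, ∀ i : Fin n,
        nnOut σ (chainWidths m qs) (L + qs.length) θ'' (S i).1
          = nnOut σ m L θ (S i).1 := by
  intro qs
  induction qs with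
  | nil =>
    intro m L θ _
    refine ⟨⟨θ, rfl⟩, ?_⟩
    intro θ'' hθ'' i
    have : θ'' = θ := hθ''
    subst this
    rfl
  | cons p rest ih =>
    obtain ⟨q, mh⟩ := p
    intro m L θ hv
    obtain ⟨hq, hqL, hmh, hrest⟩ := hv
    obtain ⟨θ', hθ'⟩ := liftSet_nonempty σ m L q mh S θ hq hqL hmh haff
    constructor
    · obtain ⟨θ'', hθ''⟩ := (ih (insertWidth m q mh) (L + 1) θ' hrest).1
      exact ⟨θ'', θ', hθ', hθ''⟩
    · rintro θ'' ⟨θ₁, hθ₁, hθ''⟩ i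
      have h1 := (ih (insertWidth m q mh) (L + 1) θ₁ hrest).2 θ'' hθ'' i
      have harith : L + ((q, mh) :: rest).length = L + 1 + rest.length := by
        simp [List.length_cons]; omega
      rw [show chainWidths m ((q, mh) :: rest) = chainWidths (insertWidth m q mh) rest
          from rfl, harith, h1]
      exact liftSet_preserves σ m L q mh S θ θ₁ hq hqL hθ₁ i
/-- **Existence of multi-layer lifting.**  For any valid chain of `J ≥ 1` one-layer
insertions, if `σ` has an affine subdomain then the `J`-step composition of
one-layer liftings is nonempty-valued, and every parameter in it has the same
outputs as `θ` on all training inputs. -/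
theorem existence_of_multi_layer_lifting
    (σ : ℝ → ℝ) (m : ℕ → ℕ) (L : ℕ) (qs : List (ℕ × ℕ))
    (hlen : 1 ≤ qs.length) (hvalid : ValidChain m L qs)
    (haff : ∃ a b lam mu : ℝ, AffineSubdomain σ a b lam mu)
    {n : ℕ} (S : Fin n → (ℕ → ℝ) × (ℕ → ℝ)) (θ : NNParams) :
    (liftChain σ S m L qs θ).Nonempty ∧
    (∀ θ' ∈ liftChain σ S m L qs θ, ∀ i : Fin n,
      nnOut σ (chainWidths m qs) (L + qs.length) θ' (S i).1
        = nnOut σ m L θ (S i).1) := by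
  exact ⟨(liftChain_main σ S haff qs m L θ hvalid).1,
    fun θ' h i => (liftChain_main σ S haff qs m L θ hvalid).2 θ' h i⟩
end
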